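/- With γ = 4/5, θ₊ = 3π/4, θ₋ = -π/4, the constant a₀ = (sin(γθ₊) cos(γθ₋)) / (cos(γθ₊) sin(γθ₋)) is a positive real number. Consequently, the piecewise-defined function u(r,θ) = r^{4/5}(A sin((4/5)θ) + cos((4/5)θ)) for 0 ≤ θ ≤ 3π/4 and r^{4/5}(a₀ A sin((4/5)θ) + cos((4/5)θ)) for -π/4 ≤ θ ≤ 0, with A = -cos((4/5)·3π/4)/sin((4/5)·3π/4), vanishes on both rays {θ = 3π/4} and {θ = -π/4}. -/

import Mathlib

/-!
With γ = 4/5 the two interface angles become γθ₊ = 3π/5 (second quadrant) and γθ₋ = -π/5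
(fourth quadrant), so a₀ is a quotient of two negative numbers. The choice of A makes
`A sin + cos` vanish at γθ₊, and a₀ is exactly the factor turning A into `-cos(γθ₋)/sin(γθ₋)`,
which makes it vanish at γθ₋ as well.
-/

open Real

theorem neg_div_mul_add_eq_zero {K : Type*} [Field K] {c s : K} (hs : s ≠ 0) :
    -c / s * s + c = 0 := by
  rw [div_mul_cancel₀ _ hs, neg_add_cancel]

theorem mul_div_mul_mul_neg_div {K : Type*} [Field K] {s c s' c' : K} (hs : s ≠ 0) (hc : c ≠ 0) :
    s * c' / (c * s') * (-c / s) = -c' / s' := by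
  field_simp

theorem sin_three_pi_div_five_pos : 0 < sin (3 * π / 5) :=
  sin_pos_of_pos_of_lt_pi (by positivity) (by linarith [pi_pos])

theorem cos_three_pi_div_five_neg : cos (3 * π / 5) < 0 :=
  cos_neg_of_pi_div_two_lt_of_lt (by linarith [pi_pos]) (by linarith [pi_pos])

theorem sin_pi_div_five_pos : 0 < sin (π / 5) :=
  sin_pos_of_pos_of_lt_pi (by positivity) (by linarith [pi_pos])

theorem cos_pi_div_five_pos : 0 < cos (π / 5) :=
  cos_pos_of_mem_Ioo ⟨by linarith [pi_pos], by linarith [pi_pos]⟩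

/-- with γ = 4/5, θ₊ = 3π/4, θ₋ = -π/4,
a₀ = (sin(γθ₊)cos(γθ₋))/(cos(γθ₊)sin(γθ₋)) > 0, and the piecewise function
vanishes on both rays {θ = θ₊} and {θ = θ₋}. -/
theorem stmt3 :
    let γ : ℝ := 4/5
    let θp : ℝ := 3 * Real.pi / 4
    let θm : ℝ := -(Real.pi / 4)
    let A : ℝ := - Real.cos (γ * θp) / Real.sin (γ * θp)
    let a₀ : ℝ := (Real.sin (γ * θp) * Real.cos (γ * θm)) /
      (Real.cos (γ * θp) * Real.sin (γ * θm))
    0 < a₀ ∧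
      (∀ r : ℝ, 0 < r → r ^ γ * (A * Real.sin (γ * θp) + Real.cos (γ * θp)) = 0) ∧
      (∀ r : ℝ, 0 < r → r ^ γ * (a₀ * A * Real.sin (γ * θm) + Real.cos (γ * θm)) = 0) := by
  intro γ θp θm A a₀
  have hp : γ * θp = 3 * π / 5 := by simp only [γ, θp]; ring
  have hm : γ * θm = -(π / 5) := by simp only [γ, θm]; ring
  have hsp : 0 < sin (γ * θp) := hp ▸ sin_three_pi_div_five_pos
  have hcp : cos (γ * θp) < 0 := hp ▸ cos_three_pi_div_five_neg
  have hsm : sin (γ * θm) < 0 := by rw [hm, sin_neg]; exact neg_neg_of_pos sin_pi_div_five_pos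
  have hcm : 0 < cos (γ * θm) := by rw [hm, cos_neg]; exact cos_pi_div_five_pos
  have ha₀A : a₀ * A = -cos (γ * θm) / sin (γ * θm) := mul_div_mul_mul_neg_div hsp.ne' hcp.ne
  refine ⟨div_pos (mul_pos hsp hcm) (mul_pos_of_neg_of_neg hcp hsm), fun r _ => ?_, fun r _ => ?_⟩
  · rw [neg_div_mul_add_eq_zero hsp.ne', mul_zero]
  · rw [ha₀A, neg_div_mul_add_eq_zero hsm.ne, mul_zero]
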